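/- Let M be a positive integer, h > 0, τ > 0, μ > 0, ν ≥ 0, γ, κ ∈ ℝ, and let a, b be periodic grid functions. Suppose the periodic grid functions u, v satisfy the homogeneous linear system (1/(2τ))·u_i − (μ/(2τ))·v_i + (γ/2)·ψ(a,u)_i − (γh²/4)·ψ(b,u)_i + (κ/2)·Δ_x u_i − (κh²/12)·Δ_x v_i − (ν/2)·v_i = 0 for all i, together with the reduction relation v_i = δ_x² u_i − (h²/12)·δ_x² v_i for all i. Then u_i = 0 and v_i = 0 for all i. (Kernel lemma in the proof of unique solvability, Theorem 5.1: the homogeneous system at each time level admits only the zero solution.) -/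

import Mathlib

open Finset

namespace BBMB

/-- A periodic grid function with period `M`. -/
def Periodic (M : ℕ) (u : ℤ → ℝ) : Prop := ∀ i : ℤ, u (i + (M : ℤ)) = u i

/-- Forward difference `δ_x u_{i+1/2} = (u_{i+1} - u_i)/h`. -/
noncomputable def dxp (h : ℝ) (u : ℤ → ℝ) (i : ℤ) : ℝ := (u (i + 1) - u i) / h

/-- Backward difference `δ_x u_{i-1/2} = (u_i - u_{i-1})/h`. -/
noncomputable def dxm (h : ℝ) (u : ℤ → ℝ) (i : ℤ) : ℝ := (u i - u (i - 1)) / h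

/-- Second difference `δ_x² u_i = (u_{i+1} - 2 u_i + u_{i-1})/h²`. -/
noncomputable def dxx (h : ℝ) (u : ℤ → ℝ) (i : ℤ) : ℝ :=
  (u (i + 1) - 2 * u i + u (i - 1)) / h ^ 2

/-- Centered difference `Δ_x u_i = (u_{i+1} - u_{i-1})/(2h)`. -/
noncomputable def Dx (h : ℝ) (u : ℤ → ℝ) (i : ℤ) : ℝ := (u (i + 1) - u (i - 1)) / (2 * h)

/-- Discrete inner product `(u, w) = h ∑_{i=1}^{M} u_i w_i`. -/
noncomputable def ip (M : ℕ) (h : ℝ) (u w : ℤ → ℝ) : ℝ :=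
  h * ∑ i ∈ Finset.Icc (1 : ℤ) (M : ℤ), u i * w i

/-- Discrete inner product `⟨δ_x u, δ_x w⟩ = h ∑_{i=1}^{M} (δ_x u_{i-1/2})(δ_x w_{i-1/2})`. -/
noncomputable def dip (M : ℕ) (h : ℝ) (u w : ℤ → ℝ) : ℝ :=
  h * ∑ i ∈ Finset.Icc (1 : ℤ) (M : ℤ), dxm h u i * dxm h w i

/-- Discrete `L²` norm `‖u‖ = √((u,u))`. -/
noncomputable def nrm (M : ℕ) (h : ℝ) (u : ℤ → ℝ) : ℝ := Real.sqrt (ip M h u u)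

/-- Discrete `H¹` seminorm `|u|₁ = √(⟨δ_x u, δ_x u⟩)`. -/
noncomputable def snorm (M : ℕ) (h : ℝ) (u : ℤ → ℝ) : ℝ := Real.sqrt (dip M h u u)

/-- Trilinear term `ψ(u,v)_i = (1/3) (u_i Δ_x v_i + Δ_x (u·v)_i)`. -/
noncomputable def psi (h : ℝ) (u v : ℤ → ℝ) (i : ℤ) : ℝ :=
  (1 / 3) * (u i * Dx h v i + Dx h (fun j => u j * v j) i)

/-!
Test the equation against `u` in the periodic inner product `(·,·)`. There `Δ_x` is
skew-adjoint, `δ_x²` is self-adjoint and the two commute, so both `ψ`-terms and both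
`κ`-terms vanish (for `(Δ_x v, u)` one uses the relation `(1 + h²/12 δ_x²) v = δ_x² u`
twice). What remains is `‖u‖²/(2τ) + (μ/(2τ) + ν/2) · (-(v,u)) = 0`. Summation by parts
and the inverse inequality `h² |v|₁² ≤ 4 ‖v‖²` give
`-(v,u) = |u|₁² + h²/12 ‖v‖² - h⁴/144 |v|₁² ≥ h²/18 ‖v‖²`, so both terms are nonnegative
and `‖u‖ = ‖v‖ = 0`.
-/

theorem sum_Icc_one_eq_sum_range (M : ℕ) (g : ℤ → ℝ) :
    ∑ i ∈ Icc (1 : ℤ) M, g i = ∑ k ∈ range M, g (k + 1) := by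
  induction M with
  | zero => simp
  | succ n ih =>
    rw [sum_range_succ, ← ih, Nat.cast_succ, ← insert_Icc_right_eq_Icc_add_one (by omega),
      sum_insert (by simp), add_comm]

section Periodic

variable {M : ℕ} {f g : ℤ → ℝ}

theorem Periodic.mul (hf : Periodic M f) (hg : Periodic M g) : Periodic M (fun i => f i * g i) :=
  Function.Periodic.mul hf hg

theorem Periodic.comp_sub (hf : Periodic M f) (k : ℤ) : Periodic M (fun i => f (i - k)) :=
  Function.Periodic.sub_const hf k

theorem Periodic.sum_Icc_comp_add_one (hf : Periodic M f) :
    ∑ i ∈ Icc (1 : ℤ) M, f (i + 1) = ∑ i ∈ Icc (1 : ℤ) M, f i := by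
  have h := sum_range_succ' (fun k : ℕ => f (k + 1)) M
  have hM : f (M + 1) = f 1 := by rw [add_comm]; exact hf 1
  rw [sum_range_succ, hM] at h
  push_cast at h
  simp only [sum_Icc_one_eq_sum_range]
  linarith

theorem Periodic.sum_Icc_comp_sub_one (hf : Periodic M f) :
    ∑ i ∈ Icc (1 : ℤ) M, f (i - 1) = ∑ i ∈ Icc (1 : ℤ) M, f i := by
  simpa using (hf.comp_sub 1).sum_Icc_comp_add_one.symm

theorem Periodic.sum_mul_shift (hf : Periodic M f) (hg : Periodic M g) :
    ∑ i ∈ Icc (1 : ℤ) M, f (i + 1) * g i = ∑ i ∈ Icc (1 : ℤ) M, f i * g (i - 1) := by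
  simpa using (hf.mul (hg.comp_sub 1)).sum_Icc_comp_add_one

theorem Periodic.Dx (hf : Periodic M f) (h : ℝ) : Periodic M (Dx h f) := fun i => by
  rw [BBMB.Dx, BBMB.Dx, add_right_comm i, ← sub_add_eq_add_sub, hf, hf]

theorem Periodic.dxx (hf : Periodic M f) (h : ℝ) : Periodic M (dxx h f) := fun i => by
  rw [BBMB.dxx, BBMB.dxx, add_right_comm i, ← sub_add_eq_add_sub, hf, hf, hf]

end Periodic

section InnerProduct

variable {M : ℕ} {h : ℝ} {f g : ℤ → ℝ}

theorem ip_comm (f g : ℤ → ℝ) : ip M h f g = ip M h g f := by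
  simp only [ip, mul_comm (f _)]

theorem dip_comm (f g : ℤ → ℝ) : dip M h f g = dip M h g f := by
  simp only [dip, mul_comm (dxm h f _)]

theorem ip_Dx_left (hf : Periodic M f) (hg : Periodic M g) :
    ip M h (Dx h f) g = -ip M h f (Dx h g) := by
  -- after subtracting the shift identities, one sum remains; it vanishes termwise
  linear_combination (norm := skip) h / (2 * h) * (hf.sum_mul_shift hg + hg.sum_mul_shift hf)
  simp only [ip, Dx, mul_sum, ← sum_sub_distrib, ← sum_add_distrib, ← sum_neg_distrib]
  exact sum_eq_zero fun i _ => by ring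

theorem ip_dxx_left (hf : Periodic M f) (hg : Periodic M g) :
    ip M h (dxx h f) g = -dip M h f g := by
  linear_combination (norm := skip)
    h / h ^ 2 * (hf.sum_mul_shift hg + (hf.mul hg).sum_Icc_comp_sub_one)
  simp only [ip, dip, dxx, dxm, mul_sum, ← sum_sub_distrib, ← sum_add_distrib,
    ← sum_neg_distrib]
  exact sum_eq_zero fun i _ => by ring

theorem ip_dxx_comm (hf : Periodic M f) (hg : Periodic M g) :
    ip M h (dxx h f) g = ip M h f (dxx h g) := by
  rw [ip_dxx_left hf hg, ip_comm f, ip_dxx_left hg hf, dip_comm]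

theorem Dx_dxx_comm (h : ℝ) (f : ℤ → ℝ) : Dx h (dxx h f) = dxx h (Dx h f) := by
  funext i
  simp only [Dx, dxx, sub_add_cancel, add_sub_cancel_right]
  ring

theorem ip_Dx_self (hf : Periodic M f) : ip M h (Dx h f) f = 0 := by
  linarith [ip_Dx_left (h := h) hf hf, ip_comm (M := M) (h := h) f (Dx h f)]

theorem ip_Dx_dxx_self (hf : Periodic M f) : ip M h (Dx h f) (dxx h f) = 0 := by
  have key : ip M h (Dx h f) (dxx h f) = -ip M h (Dx h f) (dxx h f) :=
    calc ip M h (Dx h f) (dxx h f) = ip M h (dxx h (Dx h f)) f := by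
          rw [ip_dxx_comm (hf.Dx h) hf, ip_comm]
      _ = -ip M h (Dx h f) (dxx h f) := by rw [← Dx_dxx_comm, ip_Dx_left (hf.dxx h) hf, ip_comm]
  linarith

theorem ip_psi_self {c u : ℤ → ℝ} (hc : Periodic M c) (hu : Periodic M u) :
    ip M h (psi h c u) u = 0 := by
  linear_combination (norm := skip) (1 / 3 : ℝ) * ip_Dx_left (h := h) (hc.mul hu) hu
  simp only [ip, psi, Dx, mul_sum, ← sum_sub_distrib, ← sum_add_distrib, ← sum_neg_distrib,
    zero_add]
  exact sum_eq_zero fun i _ => by ring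

theorem ip_self_nonneg (hh : 0 ≤ h) (f : ℤ → ℝ) : 0 ≤ ip M h f f :=
  mul_nonneg hh (sum_nonneg fun i _ => mul_self_nonneg (f i))

theorem dip_self_nonneg (hh : 0 ≤ h) (f : ℤ → ℝ) : 0 ≤ dip M h f f :=
  mul_nonneg hh (sum_nonneg fun _ _ => mul_self_nonneg _)

theorem sq_mul_dip_self_le (hh : 0 ≤ h) (hf : Periodic M f) :
    h ^ 2 * dip M h f f ≤ 4 * ip M h f f := by
  rcases hh.eq_or_lt with rfl | hh
  · simp [dip, ip]
  have hdip : h ^ 2 * dip M h f f = h * ∑ i ∈ Icc (1 : ℤ) M, (f i - f (i - 1)) ^ 2 := by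
    simp only [dip, dxm, mul_sum]
    exact sum_congr rfl fun i _ => by field_simp
  have hpoint : ∑ i ∈ Icc (1 : ℤ) M, (f i - f (i - 1)) ^ 2
      ≤ ∑ i ∈ Icc (1 : ℤ) M, (2 * (f i * f i) + 2 * (f (i - 1) * f (i - 1))) :=
    sum_le_sum fun i _ => by nlinarith [sq_nonneg (f i + f (i - 1))]
  rw [sum_add_distrib, ← mul_sum, ← mul_sum, (hf.mul hf).sum_Icc_comp_sub_one] at hpoint
  rw [hdip, ip]
  nlinarith [mul_le_mul_of_nonneg_left hpoint hh.le]

theorem eq_zero_of_ip_self_eq_zero (hM : 0 < M) (hh : 0 < h) (hf : Periodic M f)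
    (h0 : ip M h f f = 0) (i : ℤ) : f i = 0 := by
  have hcell : ∀ j ∈ Icc (1 : ℤ) M, f j * f j = 0 :=
    (sum_eq_zero_iff_of_nonneg fun j _ => mul_self_nonneg (f j)).mp
      ((mul_eq_zero.mp h0).resolve_left hh.ne')
  obtain ⟨j, hj, hij⟩ := Function.Periodic.exists_mem_Ico hf (Int.natCast_pos.mpr hM) i 1
  rw [hij, ← mul_self_eq_zero]
  exact hcell j (by simp only [Set.mem_Ico] at hj; simp only [mem_Icc]; omega)

end InnerProduct

section CompactRelation

variable {M : ℕ} {h : ℝ} {u v : ℤ → ℝ}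

theorem ip_left_of_rel (hrel : ∀ i, v i = dxx h u i - h ^ 2 / 12 * dxx h v i) (w : ℤ → ℝ) :
    ip M h v w = ip M h (dxx h u) w - h ^ 2 / 12 * ip M h (dxx h v) w := by
  simp only [ip, mul_sum, ← sum_sub_distrib]
  exact sum_congr rfl fun i _ => by linear_combination h * w i * hrel i

theorem ip_Dx_left_eq_zero_of_rel (hu : Periodic M u) (hv : Periodic M v)
    (hrel : ∀ i, v i = dxx h u i - h ^ 2 / 12 * dxx h v i) : ip M h (Dx h v) u = 0 := by
  have hdxx_u : ∀ w, ip M h (dxx h u) w = ip M h v w + h ^ 2 / 12 * ip M h (dxx h v) w :=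
    fun w => by linarith [ip_left_of_rel (M := M) hrel w]
  have hdxx_v : ip M h (dxx h v) (Dx h u) = 0 :=
    calc ip M h (dxx h v) (Dx h u) = -ip M h (Dx h v) (dxx h u) := by
          rw [ip_dxx_comm hv (hu.Dx h), ← Dx_dxx_comm, ip_Dx_left hv (hu.dxx h), neg_neg]
      _ = -(ip M h (Dx h v) v + h ^ 2 / 12 * ip M h (Dx h v) (dxx h v)) := by
          rw [ip_comm, hdxx_u, ip_comm v, ip_comm (dxx h v)]
      _ = 0 := by rw [ip_Dx_self hv, ip_Dx_dxx_self hv]; ring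
  calc ip M h (Dx h v) u = -ip M h v (Dx h u) := ip_Dx_left hv hu
    _ = -(ip M h (Dx h u) (dxx h u) - h ^ 2 / 12 * ip M h (dxx h v) (Dx h u)) := by
          rw [ip_left_of_rel hrel, ip_comm (dxx h u)]
    _ = 0 := by rw [ip_Dx_dxx_self hu, hdxx_v]; ring

theorem mul_ip_self_le_neg_ip_of_rel (hh : 0 ≤ h) (hu : Periodic M u) (hv : Periodic M v)
    (hrel : ∀ i, v i = dxx h u i - h ^ 2 / 12 * dxx h v i) :
    h ^ 2 / 18 * ip M h v v ≤ -ip M h v u := by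
  have hvu := ip_left_of_rel (M := M) hrel u
  have hvv := ip_left_of_rel (M := M) hrel v
  rw [ip_dxx_left hu hu, ip_dxx_comm hv hu, ip_comm v (dxx h u)] at hvu
  rw [ip_dxx_left hv hv] at hvv
  have hinv := mul_le_mul_of_nonneg_left (sq_mul_dip_self_le hh hv) (sq_nonneg h)
  nlinarith [dip_self_nonneg (M := M) hh u]

end CompactRelation

/-- Kernel lemma in the proof of unique solvability (Theorem 5.1):
the homogeneous linear system admits only the zero solution. -/
theorem homogeneous_kernel (M : ℕ) (h τ μ ν γ κ : ℝ) (a b u v : ℤ → ℝ)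
    (hM : 0 < M) (hh : 0 < h) (hτ : 0 < τ) (hμ : 0 < μ) (hν : 0 ≤ ν)
    (ha : Periodic M a) (hb : Periodic M b) (hu : Periodic M u) (hv : Periodic M v)
    (heq : ∀ i : ℤ,
      1 / (2 * τ) * u i - μ / (2 * τ) * v i
        + γ / 2 * psi h a u i - γ * h ^ 2 / 4 * psi h b u i
        + κ / 2 * Dx h u i - κ * h ^ 2 / 12 * Dx h v i - ν / 2 * v i = 0)
    (hrel : ∀ i : ℤ, v i = dxx h u i - h ^ 2 / 12 * dxx h v i) :
    ∀ i : ℤ, u i = 0 ∧ v i = 0 := by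
  have energy : 1 / (2 * τ) * ip M h u u - (μ / (2 * τ) + ν / 2) * ip M h v u
      + γ / 2 * ip M h (psi h a u) u - γ * h ^ 2 / 4 * ip M h (psi h b u) u
      + κ / 2 * ip M h (Dx h u) u - κ * h ^ 2 / 12 * ip M h (Dx h v) u = 0 := by
    simp only [ip, mul_sum, ← sum_sub_distrib, ← sum_add_distrib]
    exact sum_eq_zero fun i _ => by linear_combination h * u i * heq i
  rw [ip_psi_self ha hu, ip_psi_self hb hu, ip_Dx_self hu, ip_Dx_left_eq_zero_of_rel hu hv hrel]
    at energy
  have hvv := ip_self_nonneg (M := M) hh.le v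
  have hvu := mul_ip_self_le_neg_ip_of_rel hh.le hu hv hrel
  have hsplit : 1 / (2 * τ) * ip M h u u + (μ / (2 * τ) + ν / 2) * -ip M h v u = 0 := by
    linear_combination energy
  obtain ⟨hu_term, hv_term⟩ := (add_eq_zero_iff_of_nonneg
    (mul_nonneg (by positivity) (ip_self_nonneg hh.le u))
    (mul_nonneg (by positivity) ((mul_nonneg (by positivity) hvv).trans hvu))).mp hsplit
  have huu : ip M h u u = 0 := (mul_eq_zero.mp hu_term).resolve_left (by positivity)
  have hvv0 : ip M h v v = 0 := by
    have hvu0 : -ip M h v u = 0 := (mul_eq_zero.mp hv_term).resolve_left (by positivity)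
    have hpos : 0 < h ^ 2 / 18 := by positivity
    nlinarith
  exact fun i => ⟨eq_zero_of_ip_self_eq_zero hM hh hu huu i,
    eq_zero_of_ip_self_eq_zero hM hh hv hvv0 i⟩

end BBMB
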